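/- arXiv:1905.10632 — 3 statements merged into one kernel-verified Lean document; each statement's English description precedes it below -/
import Mathlib

section
/- Let 0 < α < 1 and let A ∈ ℝ^{n×n} be a constant matrix, viewed as the constant matrix function A(t) ≡ A. Then for every k ≥ 0 and every t > t₀, the k-th iterated fractional integral of A with base point t₀ satisfies (J^{k∘α}_{t₀} A)(t) = ((t−t₀)^{(k+1)α−1}/Γ((k+1)α)) A^k. Consequently the state-transition matrix equals Φ(t,t₀) = Σ_{k=0}^{∞} A^k (t−t₀)^{(k+1)α−1}/Γ((k+1)α), i.e. the matrix α-exponential function e_α^{(t−t₀)A} = (t−t₀)^{α−1} E_{α,α}(A (t−t₀)^α), and this series converges for every t > t₀. -/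
open MeasureTheory Set Filter Topology

attribute [local instance] Matrix.normedAddCommGroup Matrix.normedSpace

/-- Riemann–Liouville fractional integral of order `α` with base point `t₀`. -/
noncomputable def rlInt {E : Type*} [NormedAddCommGroup E] [NormedSpace ℝ E]
    (α t₀ : ℝ) (f : ℝ → E) (t : ℝ) : E :=
  (1 / Real.Gamma α) • ∫ τ in t₀..t, ((t - τ) ^ (α - 1) : ℝ) • f τ

/-- Iterated fractional integrals of the matrix function `A`. -/
noncomputable def pbTerm {n : ℕ} (α t₀ : ℝ) (A : ℝ → Matrix (Fin n) (Fin n) ℝ) :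
    ℕ → ℝ → Matrix (Fin n) (Fin n) ℝ
  | 0 => fun t => ((t - t₀) ^ (α - 1) / Real.Gamma α) • (1 : Matrix (Fin n) (Fin n) ℝ)
  | (k + 1) => fun t => rlInt α t₀ (fun τ => A τ * pbTerm α t₀ A k τ) t

/-- The state-transition matrix `Φ(t,t₀) = Σ_{k=0}^{∞} (J^{k∘α}_{t₀} A)(t)`. -/
noncomputable def stm {n : ℕ} (α t₀ : ℝ) (A : ℝ → Matrix (Fin n) (Fin n) ℝ)
    (t : ℝ) : Matrix (Fin n) (Fin n) ℝ :=
  ∑' k : ℕ, pbTerm α t₀ A k t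

/-- The two-parameter Mittag-Leffler function `E_{α,α}` applied to a matrix argument:
`E_{α,α}(M) = Σ_{k=0}^{∞} M^k / Γ((k+1)α)`. -/
noncomputable def mittagLeffler {n : ℕ} (α : ℝ) (M : Matrix (Fin n) (Fin n) ℝ) :
    Matrix (Fin n) (Fin n) ℝ :=
  ∑' k : ℕ, (1 / Real.Gamma ((k + 1) * α)) • M ^ k

/-! ### Auxiliary lemmas -/

lemma real_beta_scaled {α β a : ℝ} (hα : 0 < α) (hβ : 0 < β) (ha : 0 < a) :
    ∫ x in (0:ℝ)..a, x ^ (β - 1) * (a - x) ^ (α - 1) =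
      a ^ (α + β - 1) * (Real.Gamma α * Real.Gamma β / Real.Gamma (α + β)) := by
  have hΓ : (0:ℝ) < Real.Gamma (α + β) := Real.Gamma_pos_of_pos (by linarith)
  have hb : Complex.betaIntegral β α =
      ((Real.Gamma α * Real.Gamma β / Real.Gamma (α + β) : ℝ) : ℂ) := by
    have h := Complex.Gamma_mul_Gamma_eq_betaIntegral (s := (β:ℂ)) (t := (α:ℂ))
      (by simpa using hβ) (by simpa using hα)
    have hadd : ((β:ℂ) + α) = ((β + α : ℝ) : ℂ) := by push_cast; ring
    rw [hadd, Complex.Gamma_ofReal, Complex.Gamma_ofReal, Complex.Gamma_ofReal] at h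
    have hΓ' : (0:ℝ) < Real.Gamma (β + α) := Real.Gamma_pos_of_pos (by linarith)
    have : Complex.betaIntegral β α =
        ((Real.Gamma β : ℂ) * Real.Gamma α) / ((Real.Gamma (β + α) : ℝ) : ℂ) := by
      rw [eq_div_iff (by exact_mod_cast hΓ'.ne')]
      rw [h]; ring
    rw [this]
    have : (β + α) = (α + β) := by ring
    rw [this]
    push_cast
    ring
  have hscaled := Complex.betaIntegral_scaled (β:ℂ) (α:ℂ) ha
  have hre : (∫ x in (0:ℝ)..a, ((x:ℂ)) ^ ((β:ℂ) - 1) * ((a:ℂ) - x) ^ ((α:ℂ) - 1)) =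
      ((∫ x in (0:ℝ)..a, x ^ (β - 1) * (a - x) ^ (α - 1) : ℝ) : ℂ) := by
    rw [← intervalIntegral.integral_ofReal]
    refine intervalIntegral.integral_congr_ae (ae_of_all _ fun x hx => ?_)
    rw [Set.uIoc_of_le ha.le] at hx
    have hx0 : (0:ℝ) ≤ x := le_of_lt hx.1
    have hax : (0:ℝ) ≤ a - x := by linarith [hx.2]
    push_cast [Complex.ofReal_cpow hx0, Complex.ofReal_cpow hax]
    norm_num
  have ha' : ((a:ℂ)) ^ ((β:ℂ) + α - 1) = ((a ^ (α + β - 1) : ℝ) : ℂ) := by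
    rw [Complex.ofReal_cpow ha.le]
    push_cast
    ring_nf
  rw [hre, ha', hb] at hscaled
  exact_mod_cast hscaled

lemma conv_beta {α β t₀ t : ℝ} (hα : 0 < α) (hβ : 0 < β) (h : t₀ < t) :
    ∫ τ in t₀..t, (t - τ) ^ (α - 1) * (τ - t₀) ^ (β - 1) =
      (t - t₀) ^ (α + β - 1) * (Real.Gamma α * Real.Gamma β / Real.Gamma (α + β)) := by
  have key := intervalIntegral.integral_comp_add_right
    (fun τ => (t - τ) ^ (α - 1) * (τ - t₀) ^ (β - 1)) t₀ (a := 0) (b := t - t₀)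
  simp only [zero_add, sub_add_cancel] at key
  rw [← key]
  have : ∀ x : ℝ, (t - (x + t₀)) ^ (α - 1) * (x + t₀ - t₀) ^ (β - 1)
      = x ^ (β - 1) * ((t - t₀) - x) ^ (α - 1) := by
    intro x; ring_nf
  simp only [this]
  exact real_beta_scaled hα hβ (by linarith)

lemma gamma_shift_le {α s : ℝ} (hα : 0 < α) (hα1 : α < 1) (hs : 0 < s) :
    s * Real.Gamma s ≤ (s + α) ^ (1 - α) * Real.Gamma (s + α) := by
  have hsα : (0:ℝ) < s + α := by linarith
  have hΓ : (0:ℝ) < Real.Gamma (s + α) := Real.Gamma_pos_of_pos hsα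
  have hΓ1 : (0:ℝ) < Real.Gamma (s + α + 1) := Real.Gamma_pos_of_pos (by linarith)
  have hc := Real.convexOn_log_Gamma.2 (Set.mem_Ioi.2 hsα)
    (Set.mem_Ioi.2 (by linarith : (0:ℝ) < s + α + 1))
    (le_of_lt hα) (by linarith : (0:ℝ) ≤ 1 - α) (by ring)
  have hpt : α • (s + α) + (1 - α) • (s + α + 1) = s + 1 := by
    simp only [smul_eq_mul]; ring
  rw [hpt] at hc
  simp only [Function.comp_apply, smul_eq_mul] at hc
  have hadd : Real.Gamma (s + α + 1) = (s + α) * Real.Gamma (s + α) :=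
    Real.Gamma_add_one hsα.ne'
  rw [hadd, Real.log_mul hsα.ne' hΓ.ne'] at hc
  have h2 : α * Real.log (Real.Gamma (s + α)) +
      (1 - α) * (Real.log (s + α) + Real.log (Real.Gamma (s + α))) =
      Real.log (Real.Gamma (s + α)) + (1 - α) * Real.log (s + α) := by ring
  rw [h2] at hc
  have hG1 : Real.Gamma (s + 1) = s * Real.Gamma s := Real.Gamma_add_one hs.ne'
  have hpos : (0:ℝ) < Real.Gamma (s + 1) := Real.Gamma_pos_of_pos (by linarith)
  calc s * Real.Gamma s = Real.Gamma (s + 1) := hG1.symm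
    _ = Real.exp (Real.log (Real.Gamma (s + 1))) := (Real.exp_log hpos).symm
    _ ≤ Real.exp (Real.log (Real.Gamma (s + α)) + (1 - α) * Real.log (s + α)) :=
        Real.exp_le_exp.2 hc
    _ = (s + α) ^ (1 - α) * Real.Gamma (s + α) := by
        rw [Real.exp_add, Real.exp_log hΓ, Real.rpow_def_of_pos hsα]; ring

lemma summable_ml_aux {α : ℝ} (hα : 0 < α) (hα1 : α < 1) {L C : ℝ} (hL : 0 < L) (hC : 0 ≤ C) :
    Summable (fun k : ℕ => L ^ ((k + 1 : ℝ) * α - 1) / Real.Gamma ((k + 1) * α) * C ^ k) := by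
  set K : ℝ := L ^ α * C * 2 ^ (1 - α) with hK
  have hKnn : 0 ≤ K := by positivity
  have htend : Tendsto (fun k : ℕ => K * ((k + 1 : ℝ) * α) ^ (-α)) atTop (𝓝 0) := by
    have h1 : Tendsto (fun k : ℕ => ((k + 1 : ℝ) * α)) atTop atTop := by
      apply Tendsto.atTop_mul_const hα
      exact tendsto_atTop_add_const_right _ 1 tendsto_natCast_atTop_atTop
    have h2 := (tendsto_rpow_neg_atTop hα).comp h1
    simpa using h2.const_mul K
  have hev : ∀ᶠ k : ℕ in atTop, K * ((k + 1 : ℝ) * α) ^ (-α) ≤ 1 / 2 := by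
    exact htend.eventually (eventually_le_nhds (by norm_num : (0:ℝ) < 1/2))
  apply summable_of_ratio_norm_eventually_le (r := 1/2) (by norm_num)
  filter_upwards [hev] with k hk
  set s : ℝ := (k + 1 : ℝ) * α with hsdef
  have hs : 0 < s := by positivity
  have hsα : (0:ℝ) < s + α := by linarith
  have hΓs : (0:ℝ) < Real.Gamma s := Real.Gamma_pos_of_pos hs
  have hΓsα : (0:ℝ) < Real.Gamma (s + α) := Real.Gamma_pos_of_pos hsα
  have hsge : α ≤ s := by
    have : (1:ℝ) ≤ (k:ℝ) + 1 := by
      have := Nat.cast_nonneg (α := ℝ) k; linarith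
    nlinarith
  have h1 := gamma_shift_le hα hα1 hs
  have h3 : (s + α) ^ (1 - α) ≤ 2 ^ (1 - α) * s ^ (1 - α) := by
    rw [← Real.mul_rpow (by norm_num) hs.le]
    exact Real.rpow_le_rpow hsα.le (by linarith) (by linarith)
  have h4 : s ^ (1 - α) = s * s ^ (-α) := by
    rw [show (1:ℝ) - α = 1 + (-α) by ring, Real.rpow_add hs, Real.rpow_one]
  have hΓle : Real.Gamma s ≤ 2 ^ (1 - α) * s ^ (-α) * Real.Gamma (s + α) := by
    have h5 : s * Real.Gamma s ≤ 2 ^ (1 - α) * s ^ (1 - α) * Real.Gamma (s + α) := by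
      calc s * Real.Gamma s ≤ (s + α) ^ (1 - α) * Real.Gamma (s + α) := h1
        _ ≤ 2 ^ (1 - α) * s ^ (1 - α) * Real.Gamma (s + α) := by
            apply mul_le_mul_of_nonneg_right h3 hΓsα.le
    rw [h4] at h5
    have := (mul_le_mul_iff_right₀ hs).1
      (by linarith : s * Real.Gamma s ≤ s * (2 ^ (1 - α) * s ^ (-α) * Real.Gamma (s + α)))
    exact this
  have hkey : L ^ α * C / Real.Gamma (s + α) ≤ (1/2) / Real.Gamma s := by
    rw [div_le_div_iff₀ hΓsα hΓs]
    have h6 : L ^ α * C * Real.Gamma s ≤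
        L ^ α * C * (2 ^ (1 - α) * s ^ (-α) * Real.Gamma (s + α)) :=
      mul_le_mul_of_nonneg_left hΓle (by positivity)
    have h7 : L ^ α * C * (2 ^ (1 - α) * s ^ (-α)) ≤ 1/2 := by
      have : K * s ^ (-α) = L ^ α * C * (2 ^ (1 - α) * s ^ (-α)) := by rw [hK]; ring
      rw [← this]; exact hk
    nlinarith [Real.Gamma_pos_of_pos hsα]
  have hexp : L ^ ((k + 1 + 1 : ℝ) * α - 1) = L ^ ((k + 1 : ℝ) * α - 1) * L ^ α := by
    rw [← Real.rpow_add hL]; ring_nf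
  have hterm : L ^ ((k + 1 + 1 : ℝ) * α - 1) / Real.Gamma ((k + 1 + 1 : ℝ) * α) * C ^ (k + 1)
      ≤ 1/2 * (L ^ ((k + 1 : ℝ) * α - 1) / Real.Gamma ((k + 1 : ℝ) * α) * C ^ k) := by
    have hGeq : ((k + 1 + 1 : ℝ) * α) = s + α := by rw [hsdef]; ring
    rw [hexp, hGeq, pow_succ]
    have hP : (0:ℝ) ≤ L ^ ((k + 1 : ℝ) * α - 1) * C ^ k := by positivity
    calc L ^ ((k + 1 : ℝ) * α - 1) * L ^ α / Real.Gamma (s + α) * (C ^ k * C)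
        = (L ^ ((k + 1 : ℝ) * α - 1) * C ^ k) * (L ^ α * C / Real.Gamma (s + α)) := by ring
      _ ≤ (L ^ ((k + 1 : ℝ) * α - 1) * C ^ k) * ((1/2) / Real.Gamma s) :=
          mul_le_mul_of_nonneg_left hkey hP
      _ = 1/2 * (L ^ ((k + 1 : ℝ) * α - 1) / Real.Gamma ((k + 1 : ℝ) * α) * C ^ k) := by
          rw [hsdef]; ring
  have hnn : ∀ m : ℕ, (0:ℝ) ≤ L ^ ((m + 1 : ℝ) * α - 1) / Real.Gamma ((m + 1) * α) * C ^ m := by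
    intro m
    have := Real.Gamma_pos_of_pos (show (0:ℝ) < ((m:ℝ) + 1) * α by positivity)
    positivity
  rw [Real.norm_of_nonneg (hnn (k+1)), Real.norm_of_nonneg (hnn k)]
  convert hterm using 3 <;> push_cast <;> ring

lemma matrix_norm_mul_le {n : ℕ} (A B : Matrix (Fin n) (Fin n) ℝ) :
    ‖A * B‖ ≤ n * ‖A‖ * ‖B‖ := by
  have hA : (0:ℝ) ≤ ‖A‖ := norm_nonneg _
  have hB : (0:ℝ) ≤ ‖B‖ := norm_nonneg _
  rw [Matrix.norm_le_iff (by positivity)]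
  intro i j
  calc ‖(A * B) i j‖ = ‖∑ l, A i l * B l j‖ := by rw [Matrix.mul_apply]
    _ ≤ ∑ l, ‖A i l * B l j‖ := norm_sum_le _ _
    _ ≤ ∑ _l : Fin n, ‖A‖ * ‖B‖ := by
        apply Finset.sum_le_sum
        intro l _
        rw [norm_mul]
        exact mul_le_mul (Matrix.norm_entry_le_entrywise_sup_norm A)
          (Matrix.norm_entry_le_entrywise_sup_norm B) (norm_nonneg _) hA
    _ = n * ‖A‖ * ‖B‖ := by simp [mul_assoc]

lemma matrix_norm_pow_le {n : ℕ} (A : Matrix (Fin n) (Fin n) ℝ) (k : ℕ) :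
    ‖A ^ k‖ ≤ (n * ‖A‖ + 1) ^ k := by
  have hA : (0:ℝ) ≤ ‖A‖ := norm_nonneg _
  have hC : (0:ℝ) ≤ n * ‖A‖ + 1 := by positivity
  induction k with
  | zero =>
    simp only [pow_zero]
    rw [Matrix.norm_le_iff (by norm_num)]
    intro i j
    rw [Matrix.one_apply]
    split <;> simp
  | succ k ih =>
    rw [pow_succ', pow_succ]
    calc ‖A * A ^ k‖ ≤ n * ‖A‖ * ‖A ^ k‖ := matrix_norm_mul_le _ _
      _ ≤ (n * ‖A‖ + 1) ^ k * (n * ‖A‖ + 1) := by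
          nlinarith [norm_nonneg (A ^ k), pow_nonneg hC k]

lemma pbTerm_const {n : ℕ} {α t₀ : ℝ} (hα : 0 < α) (hα1 : α < 1)
    (A : Matrix (Fin n) (Fin n) ℝ) :
    ∀ (k : ℕ) (t : ℝ), t₀ < t →
      pbTerm α t₀ (fun _ => A) k t =
        ((t - t₀) ^ ((k + 1 : ℝ) * α - 1) / Real.Gamma ((k + 1) * α)) • A ^ k := by
  intro k
  induction k with
  | zero =>
    intro t ht
    simp [pbTerm]
  | succ k ih =>
    intro t ht
    have hL : 0 < t - t₀ := by linarith
    set β : ℝ := ((k:ℝ) + 1) * α with hβdef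
    have hβ : 0 < β := by positivity
    have hΓα : 0 < Real.Gamma α := Real.Gamma_pos_of_pos hα
    have hΓβ : 0 < Real.Gamma β := Real.Gamma_pos_of_pos hβ
    have hΓαβ : 0 < Real.Gamma (α + β) := Real.Gamma_pos_of_pos (by linarith)
    show rlInt α t₀ (fun τ => (fun _ => A) τ * pbTerm α t₀ (fun _ => A) k τ) t = _
    rw [rlInt]
    have hstep : (∫ τ in t₀..t,
          ((t - τ) ^ (α - 1) : ℝ) • ((fun _ => A) τ * pbTerm α t₀ (fun _ => A) k τ))
        = (∫ τ in t₀..t, ((t - τ) ^ (α - 1) * ((τ - t₀) ^ (β - 1) / Real.Gamma β) : ℝ))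
            • A ^ (k + 1) := by
      rw [← intervalIntegral.integral_smul_const]
      refine intervalIntegral.integral_congr_ae (ae_of_all _ fun τ hτ => ?_)
      rw [Set.uIoc_of_le ht.le] at hτ
      rw [ih τ hτ.1, Matrix.mul_smul, smul_smul, ← pow_succ']
    rw [hstep, smul_smul]
    have hint : (∫ τ in t₀..t, ((t - τ) ^ (α - 1) * ((τ - t₀) ^ (β - 1) / Real.Gamma β) : ℝ))
        = (Real.Gamma β)⁻¹ *
            ((t - t₀) ^ (α + β - 1) * (Real.Gamma α * Real.Gamma β / Real.Gamma (α + β))) := by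
      have heq : (∫ τ in t₀..t, ((t - τ) ^ (α - 1) * ((τ - t₀) ^ (β - 1) / Real.Gamma β) : ℝ))
          = ∫ τ in t₀..t, (Real.Gamma β)⁻¹ * ((t - τ) ^ (α - 1) * (τ - t₀) ^ (β - 1)) := by
        refine intervalIntegral.integral_congr fun τ _ => ?_
        ring
      rw [heq, intervalIntegral.integral_const_mul, conv_beta hα hβ ht]
    rw [hint]
    congr 1
    have hGeq : α + β = ((k:ℝ) + 1 + 1) * α := by rw [hβdef]; ring
    have hcast : ((k + 1 : ℕ) : ℝ) + 1 = (k:ℝ) + 1 + 1 := by push_cast; ring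
    rw [hcast, ← hGeq]
    field_simp

/-- For a constant matrix `A`, the iterated fractional integrals are
`(J^{k∘α}_{t₀} A)(t) = ((t−t₀)^{(k+1)α−1}/Γ((k+1)α)) A^k`, the Peano–Baker series
converges for every `t > t₀`, and the state-transition matrix equals the matrix
`α`-exponential `e_α^{(t−t₀)A} = (t−t₀)^{α−1} E_{α,α}(A (t−t₀)^α)`. -/
theorem stm_const_matrix {n : ℕ} (α t₀ : ℝ) (hα : 0 < α) (hα1 : α < 1)
    (A : Matrix (Fin n) (Fin n) ℝ) :
    (∀ (k : ℕ) (t : ℝ), t₀ < t →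
        pbTerm α t₀ (fun _ => A) k t =
          ((t - t₀) ^ ((k + 1 : ℝ) * α - 1) / Real.Gamma ((k + 1) * α)) • A ^ k) ∧
      (∀ t : ℝ, t₀ < t →
        Summable (fun k : ℕ =>
          ((t - t₀) ^ ((k + 1 : ℝ) * α - 1) / Real.Gamma ((k + 1) * α)) • A ^ k)) ∧
      ∀ t : ℝ, t₀ < t →
        stm α t₀ (fun _ => A) t =
          (t - t₀) ^ (α - 1) • mittagLeffler α (((t - t₀) ^ α : ℝ) • A) := by
  have hpb := pbTerm_const (t₀ := t₀) hα hα1 A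
  have hsum : ∀ t : ℝ, t₀ < t →
      Summable (fun k : ℕ =>
        ((t - t₀) ^ ((k + 1 : ℝ) * α - 1) / Real.Gamma ((k + 1) * α)) • A ^ k) := by
    intro t ht
    have hL : 0 < t - t₀ := by linarith
    have hC : (0:ℝ) ≤ n * ‖A‖ + 1 := by positivity
    refine Summable.of_norm_bounded (g :=
      fun k : ℕ => (t - t₀) ^ ((k + 1 : ℝ) * α - 1) / Real.Gamma ((k + 1) * α)
        * (n * ‖A‖ + 1) ^ k)
      (summable_ml_aux hα hα1 hL hC) fun k => ?_
    have hΓ : 0 < Real.Gamma (((k:ℝ) + 1) * α) :=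
      Real.Gamma_pos_of_pos (by positivity)
    rw [norm_smul, Real.norm_eq_abs, abs_of_nonneg (by positivity)]
    exact mul_le_mul_of_nonneg_left (matrix_norm_pow_le A k) (by positivity)
  refine ⟨hpb, hsum, fun t ht => ?_⟩
  have hL : 0 < t - t₀ := by linarith
  set L : ℝ := t - t₀ with hLdef
  have h1 : stm α t₀ (fun _ => A) t =
      ∑' k : ℕ, (L ^ ((k + 1 : ℝ) * α - 1) / Real.Gamma ((k + 1) * α)) • A ^ k := by
    rw [stm]
    exact tsum_congr fun k => hpb k t ht
  have h2 : ∀ k : ℕ, (1 / Real.Gamma ((k + 1) * α)) • ((L ^ α : ℝ) • A) ^ k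
      = L ^ (1 - α) • ((L ^ ((k + 1 : ℝ) * α - 1) / Real.Gamma ((k + 1) * α)) • A ^ k) := by
    intro k
    rw [smul_pow, smul_smul, smul_smul]
    congr 1
    have hLk : (L ^ α) ^ k = L ^ (α * (k:ℝ)) := by
      rw [← Real.rpow_natCast (L ^ α) k, ← Real.rpow_mul hL.le]
    have h3 : L ^ (1 - α) * L ^ ((k + 1 : ℝ) * α - 1) = L ^ (α * (k:ℝ)) := by
      rw [← Real.rpow_add hL]
      congr 1
      ring
    rw [hLk, ← h3]
    ring
  rw [h1, mittagLeffler]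
  rw [tsum_congr h2, Summable.tsum_const_smul _ (hsum t ht), smul_smul, ← Real.rpow_add hL,
    show α - 1 + (1 - α) = 0 by ring, Real.rpow_zero, one_smul]
end

section
/- Let 0 < α < 1 and let A(t) be the 2×2 matrix function A(t) = [[0, t], [0, 0]]. Then the generalized Peano–Baker series with base point t₀ = 0 terminates after two terms ((J^{k∘α}_{0} A)(t) = 0 for all k ≥ 2 and t > 0) and the state-transition matrix equals, for every t > 0, Φ(t,0) = [[t^{α−1}/Γ(α), (α/Γ(2α+1)) t^{2α}], [0, t^{α−1}/Γ(α)]]. -/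
open MeasureTheory Set Filter Topology

attribute [local instance] Matrix.normedAddCommGroup Matrix.normedSpace

def Cmat : Matrix (Fin 2) (Fin 2) ℝ := !![0, 1; 0, 0]

lemma Amat_eq (τ : ℝ) : !![(0 : ℝ), τ; 0, 0] = τ • Cmat := by
  ext i j
  fin_cases i <;> fin_cases j <;> simp [Cmat]

lemma Cmat_mul_Cmat : Cmat * Cmat = 0 := by
  ext i j
  fin_cases i <;> fin_cases j <;> simp [Cmat, Matrix.mul_apply, Fin.sum_univ_two]

lemma beta_aux {α t : ℝ} (hα : 0 < α) (ht : 0 < t) :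
    ∫ τ in (0:ℝ)..t, τ ^ α * (t - τ) ^ (α - 1) =
      t ^ (2 * α) * (Real.Gamma (α + 1) * Real.Gamma α / Real.Gamma (2 * α + 1)) := by
  have hG : Real.Gamma (2 * α + 1) ≠ 0 := (Real.Gamma_pos_of_pos (by linarith)).ne'
  have key := Complex.betaIntegral_scaled ((α : ℂ) + 1) (α : ℂ) ht
  have hbeta : Complex.Gamma ((α:ℂ)+1) * Complex.Gamma (α:ℂ) =
      Complex.Gamma ((α:ℂ)+1+α) * Complex.betaIntegral ((α:ℂ)+1) (α:ℂ) :=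
    Complex.Gamma_mul_Gamma_eq_betaIntegral (by simp; linarith) (by simpa using hα)
  have hL : (∫ x in (0:ℝ)..t, (x:ℂ) ^ ((α:ℂ)+1-1) * ((t:ℂ) - x) ^ ((α:ℂ)-1))
      = ((∫ τ in (0:ℝ)..t, τ ^ α * (t-τ) ^ (α-1) : ℝ) : ℂ) := by
    rw [← intervalIntegral.integral_ofReal]
    apply intervalIntegral.integral_congr
    intro x hx
    rw [uIcc_of_le ht.le] at hx
    have hx0 : 0 ≤ x := hx.1
    have hx1 : 0 ≤ t - x := by linarith [hx.2]
    dsimp only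
    have h1 : ((α:ℂ)-1) = ((α-1:ℝ):ℂ) := by push_cast; ring
    have h2 : ((t:ℂ) - (x:ℂ)) = ((t-x:ℝ):ℂ) := by push_cast; ring
    rw [add_sub_cancel_right, h1, h2, ← Complex.ofReal_cpow hx1, ← Complex.ofReal_cpow hx0,
      ← Complex.ofReal_mul]
  rw [hL] at key
  have hexp : (α:ℂ)+1+(α:ℂ)-1 = ((2*α : ℝ) : ℂ) := by push_cast; ring
  have hsum : (α:ℂ)+1+(α:ℂ) = ((2*α+1 : ℝ) : ℂ) := by push_cast; ring
  rw [hexp, ← Complex.ofReal_cpow ht.le] at key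
  rw [hsum, Complex.Gamma_ofReal] at hbeta
  have hC : ((α:ℂ)+1) = ((α+1 : ℝ) : ℂ) := by push_cast; ring
  rw [hC, Complex.Gamma_ofReal, Complex.Gamma_ofReal] at hbeta
  have hG' : ((Real.Gamma (2*α+1) : ℝ) : ℂ) ≠ 0 := by exact_mod_cast hG
  have hbeta' : Complex.betaIntegral ((α+1:ℝ):ℂ) (α:ℂ)
      = ((Real.Gamma (α+1) * Real.Gamma α / Real.Gamma (2*α+1) : ℝ) : ℂ) := by
    push_cast
    rw [eq_div_iff hG']
    push_cast at hbeta
    linear_combination -hbeta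
  rw [hC, hbeta', ← Complex.ofReal_mul] at key
  exact_mod_cast key

lemma pbTerm_one (α : ℝ) (t : ℝ) :
    pbTerm α 0 (fun s => !![(0 : ℝ), s; 0, 0]) 1 t =
      ((1 / Real.Gamma α) *
        ∫ τ in (0:ℝ)..t, (t - τ) ^ (α - 1) * ((τ - 0) ^ (α - 1) / Real.Gamma α * τ)) • Cmat := by
  have hint : ∀ τ : ℝ,
      ((t - τ) ^ (α - 1) : ℝ) • (!![(0 : ℝ), τ; 0, 0] *
        (((τ - 0) ^ (α - 1) / Real.Gamma α) • (1 : Matrix (Fin 2) (Fin 2) ℝ))) =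
      ((t - τ) ^ (α - 1) * ((τ - 0) ^ (α - 1) / Real.Gamma α * τ)) • Cmat := by
    intro τ
    rw [Matrix.mul_smul, Matrix.mul_one, Amat_eq, smul_smul, smul_smul]
    congr 1
    ring
  show rlInt α 0 _ t = _
  rw [rlInt]
  simp only [pbTerm]
  simp_rw [hint, intervalIntegral.integral_smul_const, smul_smul]

lemma pbTerm_ge_two (α : ℝ) (k : ℕ) (t : ℝ) :
    pbTerm α 0 (fun s => !![(0 : ℝ), s; 0, 0]) (k + 2) t = 0 := by
  induction k generalizing t with
  | zero =>
      have hmul : ∀ τ : ℝ,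
          !![(0 : ℝ), τ; 0, 0] * pbTerm α 0 (fun s => !![(0 : ℝ), s; 0, 0]) 1 τ = 0 := by
        intro τ
        rw [pbTerm_one, Matrix.mul_smul, Amat_eq, Matrix.smul_mul, Cmat_mul_Cmat]
        simp
      show rlInt α 0 _ t = 0
      rw [rlInt]
      simp_rw [hmul, smul_zero, intervalIntegral.integral_zero, smul_zero]
  | succ m ih =>
      show rlInt α 0 _ t = 0
      rw [rlInt]
      simp_rw [ih, mul_zero, smul_zero, intervalIntegral.integral_zero, smul_zero]

/-- For `A(t) = [[0, t], [0, 0]]` the generalized Peano–Baker series with base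
point `0` terminates after two terms, and the state-transition matrix equals
`Φ(t,0) = [[t^{α−1}/Γ(α), (α/Γ(2α+1)) t^{2α}], [0, t^{α−1}/Γ(α)]]` for `t > 0`. -/
theorem stm_example (α : ℝ) (hα : 0 < α) (hα1 : α < 1) :
    (∀ k : ℕ, 2 ≤ k → ∀ t : ℝ, 0 < t →
        pbTerm α 0 (fun s => !![(0 : ℝ), s; 0, 0]) k t = 0) ∧
      ∀ t : ℝ, 0 < t →
        stm α 0 (fun s => !![(0 : ℝ), s; 0, 0]) t =
          !![t ^ (α - 1) / Real.Gamma α, (α / Real.Gamma (2 * α + 1)) * t ^ (2 * α);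
             0, t ^ (α - 1) / Real.Gamma α] := by
  have hΓ : Real.Gamma α ≠ 0 := (Real.Gamma_pos_of_pos hα).ne'
  have hG : Real.Gamma (2 * α + 1) ≠ 0 := (Real.Gamma_pos_of_pos (by linarith)).ne'
  constructor
  · intro k hk t _
    obtain ⟨m, rfl⟩ := Nat.exists_eq_add_of_le hk
    rw [Nat.add_comm]
    exact pbTerm_ge_two α m t
  · intro t ht
    -- scalar value of the integral in `pbTerm_one`
    have hscal : (1 / Real.Gamma α) *
        ∫ τ in (0:ℝ)..t, (t - τ) ^ (α - 1) * ((τ - 0) ^ (α - 1) / Real.Gamma α * τ)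
        = α / Real.Gamma (2 * α + 1) * t ^ (2 * α) := by
      have hcong : ∫ τ in (0:ℝ)..t, (t - τ) ^ (α - 1) * ((τ - 0) ^ (α - 1) / Real.Gamma α * τ)
          = (1 / Real.Gamma α) * ∫ τ in (0:ℝ)..t, τ ^ α * (t - τ) ^ (α - 1) := by
        rw [← intervalIntegral.integral_const_mul]
        apply intervalIntegral.integral_congr
        intro τ hτ
        rw [uIcc_of_le ht.le] at hτ
        dsimp only
        rw [sub_zero]
        rcases eq_or_lt_of_le hτ.1 with h | h
        · rw [← h]
          simp [Real.zero_rpow (by intro h'; linarith [h'] : α - 1 ≠ 0),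
            Real.zero_rpow hα.ne']
        · have hτα : τ ^ α = τ ^ (α - 1) * τ := by
            rw [← Real.rpow_add_one h.ne' (α - 1), sub_add_cancel]
          rw [hτα]
          ring
      rw [hcong, beta_aux hα ht, Real.Gamma_add_one hα.ne']
      field_simp
    have h2 : ∀ b : ℕ, b ∉ ({0, 1} : Finset ℕ) →
        pbTerm α 0 (fun s => !![(0 : ℝ), s; 0, 0]) b t = 0 := by
      intro b hb
      have hb2 : 2 ≤ b := by
        rcases b with _ | _ | b
        · simp at hb
        · simp at hb
        · omega
      obtain ⟨m, rfl⟩ := Nat.exists_eq_add_of_le hb2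
      rw [Nat.add_comm]
      exact pbTerm_ge_two α m t
    rw [stm, tsum_eq_sum h2, Finset.sum_pair (by norm_num : (0:ℕ) ≠ 1)]
    rw [pbTerm_one, hscal]
    show ((t - 0) ^ (α - 1) / Real.Gamma α) • (1 : Matrix (Fin 2) (Fin 2) ℝ) + _ = _
    rw [sub_zero]
    ext i j
    fin_cases i <;> fin_cases j <;>
      simp [Cmat, Matrix.one_apply, mul_comm]
end

section
/- Let 0 < α < 1 and define Φ(t,0) = [[t^{α−1}/Γ(α), (α/Γ(2α+1)) t^{2α}], [0, t^{α−1}/Γ(α)]] for t > 0, and A(t) = [[0, t], [0, 0]]. Then: (i) for every t > 0 the Riemann–Liouville derivative satisfies (D^α_{0} Φ(·,0))(t) = [[0, t^{α}/Γ(α)], [0, 0]] = A(t) Φ(t,0); and (ii) (J^{1−α}_{0} Φ(·,0))(t) tends to the 2×2 identity matrix as t → 0⁺, i.e. lim_{t→0⁺} (J^{1−α}_{0} Φ(·,0))(t) = 𝟙. -/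
open MeasureTheory Set Filter Topology

attribute [local instance] Matrix.normedAddCommGroup Matrix.normedSpace

/-- Riemann–Liouville fractional derivative of order `α` with base point `t₀`. -/
noncomputable def rlDeriv {E : Type*} [NormedAddCommGroup E] [NormedSpace ℝ E]
    (α t₀ : ℝ) (f : ℝ → E) (t : ℝ) : E :=
  deriv (fun s => rlInt (1 - α) t₀ f s) t

/-- The explicit state-transition matrix of the example:
`Φ(t,0) = [[t^{α−1}/Γ(α), (α/Γ(2α+1)) t^{2α}], [0, t^{α−1}/Γ(α)]]`. -/
noncomputable def Phi (α t : ℝ) : Matrix (Fin 2) (Fin 2) ℝ :=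
  !![t ^ (α - 1) / Real.Gamma α, (α / Real.Gamma (2 * α + 1)) * t ^ (2 * α);
     0, t ^ (α - 1) / Real.Gamma α]

/-- The matrix function of the example: `A(t) = [[0, t], [0, 0]]`. -/
def Amat (t : ℝ) : Matrix (Fin 2) (Fin 2) ℝ := !![0, t; 0, 0]

/-! ### Auxiliary lemmas -/

/-- real Beta integral value -/
lemma beta_eval {a b t : ℝ} (ha : 0 < a) (hb : 0 < b) (ht : 0 < t) :
    ∫ τ in (0:ℝ)..t, τ ^ (a - 1) * (t - τ) ^ (b - 1)
      = Real.Gamma a * Real.Gamma b / Real.Gamma (a + b) * t ^ (a + b - 1) := by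
  have h1 : ((∫ τ in (0:ℝ)..t, τ ^ (a - 1) * (t - τ) ^ (b - 1) : ℝ) : ℂ)
      = ∫ τ in (0:ℝ)..t, (τ : ℂ) ^ ((a : ℂ) - 1) * ((t : ℂ) - τ) ^ ((b : ℂ) - 1) := by
    rw [← intervalIntegral.integral_ofReal]
    apply intervalIntegral.integral_congr
    intro x hx
    rw [uIcc_of_le ht.le] at hx
    push_cast
    rw [Complex.ofReal_cpow hx.1, Complex.ofReal_cpow (sub_nonneg.2 hx.2)]
    push_cast
    ring
  rw [Complex.betaIntegral_scaled (a : ℂ) (b : ℂ) ht] at h1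
  have h2 : Complex.Gamma a * Complex.Gamma b
      = Complex.Gamma ((a : ℂ) + b) * Complex.betaIntegral a b :=
    Complex.Gamma_mul_Gamma_eq_betaIntegral (by simpa using ha) (by simpa using hb)
  have hG : (0:ℝ) < Real.Gamma (a + b) := Real.Gamma_pos_of_pos (by linarith)
  have hB : Complex.betaIntegral a b
      = ((Real.Gamma a * Real.Gamma b / Real.Gamma (a + b) : ℝ) : ℂ) := by
    have hab : ((a:ℂ) + b) = ((a + b : ℝ) : ℂ) := by push_cast; ring
    have hGC : Complex.Gamma ((a : ℂ) + b) ≠ 0 := by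
      rw [hab, Complex.Gamma_ofReal]
      exact_mod_cast hG.ne'
    rw [Complex.ofReal_div, Complex.ofReal_mul, ← Complex.Gamma_ofReal, ← Complex.Gamma_ofReal,
      ← Complex.Gamma_ofReal, ← hab, eq_div_iff hGC, mul_comm]
    exact h2.symm
  rw [hB] at h1
  have h3 : ((t : ℂ) ^ ((a : ℂ) + b - 1)) = ((t ^ (a + b - 1) : ℝ) : ℂ) := by
    rw [Complex.ofReal_cpow ht.le]
    push_cast
    ring_nf
  rw [h3, ← Complex.ofReal_mul] at h1
  have := Complex.ofReal_inj.mp h1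
  rw [this]; ring

/-- integrability of the Beta integrand -/
lemma beta_integrable {a b t : ℝ} (ha : 0 < a) (hb : 0 < b) (ht : 0 < t) :
    IntervalIntegrable (fun τ => τ ^ (a - 1) * (t - τ) ^ (b - 1)) volume 0 t := by
  have h1 : IntervalIntegrable (fun τ => τ ^ (a - 1) * (t - τ) ^ (b - 1)) volume 0 (t/2) := by
    apply IntervalIntegrable.mul_continuousOn
    · exact intervalIntegral.intervalIntegrable_rpow' (by linarith)
    · apply ContinuousOn.rpow_const
      · fun_prop
      · intro x hx
        rw [uIcc_of_le (by linarith : (0:ℝ) ≤ t/2)] at hx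
        left
        intro h
        have : x = t := by linarith [sub_eq_zero.mp h]
        have := hx.2
        linarith
  have h2 : IntervalIntegrable (fun τ => τ ^ (a - 1) * (t - τ) ^ (b - 1)) volume (t/2) t := by
    apply IntervalIntegrable.continuousOn_mul
    · have base : IntervalIntegrable (fun x : ℝ => x ^ (b - 1)) volume 0 (t/2) :=
        intervalIntegral.intervalIntegrable_rpow' (by linarith)
      have h := (base.comp_sub_left t).symm
      rw [show t - t/2 = t/2 by ring] at h
      simpa using h
    · apply ContinuousOn.rpow_const
      · fun_prop
      · intro x hx
        rw [uIcc_of_le (by linarith : t/2 ≤ t)] at hx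
        left
        intro h
        rw [h] at hx
        have := hx.1
        linarith
  exact h1.trans h2

noncomputable def e12 : Matrix (Fin 2) (Fin 2) ℝ := !![0, 1; 0, 0]

noncomputable instance matENormedAddMonoid : ENormedAddMonoid (Matrix (Fin 2) (Fin 2) ℝ) :=
  NormedAddCommGroup.toENormedAddCommMonoid.toENormedAddMonoid

lemma my_smul_const {f : ℝ → ℝ} {a b : ℝ} (h : IntervalIntegrable f volume a b)
    (c : Matrix (Fin 2) (Fin 2) ℝ) :
    IntervalIntegrable (fun x => f x • c) volume a b :=
  ⟨h.1.smul_const c, h.2.smul_const c⟩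

/-- key computation: `J^{1-α} Φ` for `t > 0`. -/
lemma rlInt_Phi {α : ℝ} (hα : 0 < α) (hα1 : α < 1) {t : ℝ} (ht : 0 < t) :
    rlInt (1 - α) 0 (fun s => Phi α s) t
      = 1 + (α / Real.Gamma (α + 2) * t ^ (α + 1)) • e12 := by
  have hΓα : (0:ℝ) < Real.Gamma α := Real.Gamma_pos_of_pos hα
  have hΓ1α : (0:ℝ) < Real.Gamma (1 - α) := Real.Gamma_pos_of_pos (by linarith)
  have hΓ2α : (0:ℝ) < Real.Gamma (2*α + 1) := Real.Gamma_pos_of_pos (by linarith)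
  have hΓα2 : (0:ℝ) < Real.Gamma (α + 2) := Real.Gamma_pos_of_pos (by linarith)
  have hint : ∀ τ : ℝ, ((t - τ) ^ (1 - α - 1) : ℝ) • Phi α τ
      = ((1 / Real.Gamma α) * (τ ^ (α - 1) * (t - τ) ^ (1 - α - 1))) •
          (1 : Matrix (Fin 2) (Fin 2) ℝ)
        + ((α / Real.Gamma (2*α + 1)) * (τ ^ (2*α + 1 - 1) * (t - τ) ^ (1 - α - 1))) • e12 := by
    intro τ
    ext i j
    fin_cases i <;> fin_cases j <;>
      simp [Phi, e12, Matrix.one_apply, show (2*α + 1 - 1 : ℝ) = 2*α by ring] <;> ring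
  have i1 : IntervalIntegrable (fun τ => τ ^ (α - 1) * (t - τ) ^ (1 - α - 1)) volume 0 t :=
    beta_integrable hα (by linarith : (0:ℝ) < 1 - α) ht
  have i2 : IntervalIntegrable (fun τ => τ ^ (2*α + 1 - 1) * (t - τ) ^ (1 - α - 1)) volume 0 t :=
    beta_integrable (by linarith : (0:ℝ) < 2*α + 1) (by linarith : (0:ℝ) < 1 - α) ht
  have e1 : (∫ τ in (0:ℝ)..t, τ ^ (α - 1) * (t - τ) ^ (1 - α - 1))
      = Real.Gamma α * Real.Gamma (1 - α) := by
    rw [beta_eval hα (by linarith : (0:ℝ) < 1 - α) ht]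
    rw [show α + (1 - α) = 1 by ring]
    simp [Real.Gamma_one]
  have e2 : (∫ τ in (0:ℝ)..t, τ ^ (2*α + 1 - 1) * (t - τ) ^ (1 - α - 1))
      = Real.Gamma (2*α + 1) * Real.Gamma (1 - α) / Real.Gamma (α + 2) * t ^ (α + 1) := by
    rw [beta_eval (by linarith : (0:ℝ) < 2*α + 1) (by linarith : (0:ℝ) < 1 - α) ht]
    rw [show 2*α + 1 + (1 - α) = α + 2 by ring, show (α + 2 - 1 : ℝ) = α + 1 by ring]
  rw [rlInt]
  simp only [hint]
  rw [intervalIntegral.integral_add (my_smul_const (i1.const_mul _) _)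
      (my_smul_const (i2.const_mul _) _),
    intervalIntegral.integral_smul_const, intervalIntegral.integral_smul_const,
    intervalIntegral.integral_const_mul, intervalIntegral.integral_const_mul, e1, e2,
    smul_add, smul_smul, smul_smul]
  congr 1
  · rw [show (1 / Real.Gamma (1 - α)) * (1 / Real.Gamma α * (Real.Gamma α * Real.Gamma (1 - α)))
        = 1 by field_simp, one_smul]
  · congr 1
    field_simp

/-- (i) `(D^α_{0} Φ(·,0))(t) = [[0, t^α/Γ(α)], [0, 0]] = A(t) Φ(t,0)` for `t > 0`;
(ii) `lim_{t→0⁺} (J^{1−α}_{0} Φ(·,0))(t) = 𝟙`. -/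
theorem example_stm_verification (α : ℝ) (hα : 0 < α) (hα1 : α < 1) :
    (∀ t : ℝ, 0 < t →
        rlDeriv α 0 (fun s => Phi α s) t = !![0, t ^ α / Real.Gamma α; 0, 0] ∧
        rlDeriv α 0 (fun s => Phi α s) t = Amat t * Phi α t) ∧
      Tendsto (fun t => rlInt (1 - α) 0 (fun s => Phi α s) t) (𝓝[>] 0)
        (𝓝 (1 : Matrix (Fin 2) (Fin 2) ℝ)) := by
  have hΓα : (0:ℝ) < Real.Gamma α := Real.Gamma_pos_of_pos hα
  have hΓα2 : Real.Gamma (α + 2) = (α + 1) * (α * Real.Gamma α) := by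
    rw [show (α + 2 : ℝ) = (α + 1) + 1 by ring, Real.Gamma_add_one (by positivity),
      Real.Gamma_add_one hα.ne']
  constructor
  · intro t ht
    have hderiv : rlDeriv α 0 (fun s => Phi α s) t = (t ^ α / Real.Gamma α) • e12 := by
      have hev : (fun s => rlInt (1 - α) 0 (fun s => Phi α s) s)
          =ᶠ[𝓝 t] fun s => 1 + (α / Real.Gamma (α + 2) * s ^ (α + 1)) • e12 := by
        filter_upwards [Ioi_mem_nhds ht] with s hs using rlInt_Phi hα hα1 hs
      rw [rlDeriv, hev.deriv_eq]
      have h1 : HasDerivAt (fun s : ℝ => s ^ (α + 1)) ((α + 1) * t ^ α) t := by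
        have := Real.hasDerivAt_rpow_const (x := t) (p := α + 1) (Or.inl ht.ne')
        simpa [show α + 1 - 1 = α by ring] using this
      have h2 := (((h1.const_mul (α / Real.Gamma (α + 2))).smul_const e12).const_add
        (1 : Matrix (Fin 2) (Fin 2) ℝ))
      rw [h2.deriv]
      congr 1
      rw [hΓα2]
      field_simp
    have key : rlDeriv α 0 (fun s => Phi α s) t = !![0, t ^ α / Real.Gamma α; 0, 0] := by
      rw [hderiv]
      ext i j
      fin_cases i <;> fin_cases j <;> simp [e12]
    refine ⟨key, key.trans ?_⟩
    ext i j
    fin_cases i <;> fin_cases j <;>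
      simp [Amat, Phi, Matrix.mul_apply, Fin.sum_univ_two]
    rw [show (α : ℝ) = 1 + (α - 1) by ring, Real.rpow_add ht, Real.rpow_one]
    ring
  · apply Tendsto.congr' (f₁ := fun t => 1 + (α / Real.Gamma (α + 2) * t ^ (α + 1)) • e12)
    · filter_upwards [self_mem_nhdsWithin] with s hs using (rlInt_Phi hα hα1 hs).symm
    · have hpow : Tendsto (fun t : ℝ => t ^ (α + 1)) (𝓝[>] 0) (𝓝 0) := by
        have := (Real.continuousAt_rpow_const 0 (α + 1) (Or.inr (by positivity))).tendsto
        rw [Real.zero_rpow (by positivity)] at this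
        exact this.mono_left nhdsWithin_le_nhds
      have h := ((hpow.const_mul (α / Real.Gamma (α + 2))).smul_const e12).const_add
        (1 : Matrix (Fin 2) (Fin 2) ℝ)
      simpa using h
end
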